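/- Let (X,d) be a k-coarsely geodesic metric space with bounded geometry at scale 1/5, and let ε satisfy 1 ≤ ε ≤ k. Write |·| for the 1/5-volume. Then there exists a constant M > 0, depending only on X, k and ε, such that for every bounded subset A ⊆ X and every maximal ε-separated subset Z ⊆ A (any two distinct points of Z at distance > ε, and every point of A within distance ε of Z), the L¹-Poincaré constant at scale k of Z with the counting measure satisfies h_k^1(Z) ≤ M · h_k(A). -/

import Mathlib

open Metric Set Filter

/-- The `α`-neighbourhood `A^{+α}` of a subset `A` of a metric space. -/
def thickSet {X : Type*} [PseudoMetricSpace X] (A : Set X) (α : ℝ) : Set X :=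
  {x | ∃ a ∈ A, dist x a ≤ α}

/-- `c 0, …, c n` is a `k`-path (of length `n`) in `Y`. -/
def IsKPath {X : Type*} [PseudoMetricSpace X] (k : ℝ) (Y : Set X) (c : ℕ → X) (n : ℕ) : Prop :=
  (∀ i ≤ n, c i ∈ Y) ∧ ∀ i < n, dist (c i) (c (i + 1)) ≤ k

/-- `a` and `b` are connected by a `k`-path in `Y`. -/
def KConn {X : Type*} [PseudoMetricSpace X] (k : ℝ) (Y : Set X) (a b : X) : Prop :=
  ∃ n : ℕ, ∃ c : ℕ → X, c 0 = a ∧ c n = b ∧ IsKPath k Y c n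

/-- `Y` is `k`-coarsely connected. -/
def KCoarselyConnected {X : Type*} [PseudoMetricSpace X] (k : ℝ) (Y : Set X) : Prop :=
  ∀ a ∈ Y, ∀ b ∈ Y, KConn k Y a b

/-- `C` is a `k`-coarsely connected component of `Y`, i.e. a maximal
`k`-coarsely connected subset of `Y`. -/
def IsKComponent {X : Type*} [PseudoMetricSpace X] (k : ℝ) (Y C : Set X) : Prop :=
  C ⊆ Y ∧ KCoarselyConnected k C ∧
    ∀ C' : Set X, C ⊆ C' → C' ⊆ Y → KCoarselyConnected k C' → C' = C

/-- `Y` is `k`-coarsely geodesic with control function `σ`. -/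
def KCoarselyGeodesicWith {X : Type*} [PseudoMetricSpace X] (k : ℝ) (σ : ℝ → ℝ) (Y : Set X) :
    Prop :=
  ∀ a ∈ Y, ∀ b ∈ Y, ∃ n : ℕ, ∃ c : ℕ → X,
    c 0 = a ∧ c n = b ∧ IsKPath k Y c n ∧ (n : ℝ) ≤ σ (dist a b)

/-- `Y` is `k`-coarsely geodesic. -/
def KCoarselyGeodesic {X : Type*} [PseudoMetricSpace X] (k : ℝ) (Y : Set X) : Prop :=
  ∃ σ : ℝ → ℝ, KCoarselyGeodesicWith k σ Y

/-- `Y` is coarsely geodesic. -/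
def CoarselyGeodesic {X : Type*} [PseudoMetricSpace X] (Y : Set X) : Prop :=
  ∃ k > (0 : ℝ), KCoarselyGeodesic k Y

/-- The collection `𝒵` of subsets of `X` coarsely separates the subset `Y`. -/
def CoarselySeparates {X : Type*} [PseudoMetricSpace X] (𝒵 : Set (Set X)) (Y : Set X) : Prop :=
  ∃ k > (0 : ℝ), ∃ L ≥ (0 : ℝ), KCoarselyConnected k Y ∧
    ∀ D ≥ (0 : ℝ), ∃ Z ∈ 𝒵, ∃ C₁ C₂ : Set X,
      IsKComponent k (Y \ thickSet Z L) C₁ ∧ IsKComponent k (Y \ thickSet Z L) C₂ ∧ C₁ ≠ C₂ ∧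
      (∃ p ∈ C₁, ∀ z ∈ Z, D ≤ dist p z) ∧ (∃ q ∈ C₂, ∀ z ∈ Z, D ≤ dist q z)

/-- `X` has bounded geometry at scale `s`: every ball of radius `r` can be covered by a
uniformly bounded number of closed balls of radius `s`. -/
def BddGeomAtScale (X : Type*) [PseudoMetricSpace X] (s : ℝ) : Prop :=
  ∀ r ≥ (0 : ℝ), ∃ n : ℕ, ∀ x : X, ∃ F : Finset X,
    F.card ≤ n ∧ Metric.closedBall x r ⊆ ⋃ c ∈ F, Metric.closedBall c s

/-- The `s`-volume of a subset `A`: the minimal number of closed balls of radius `s`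
needed to cover `A`. -/
noncomputable def svol {X : Type*} [PseudoMetricSpace X] (s : ℝ) (A : Set X) : ℕ :=
  sInf {n : ℕ | ∃ F : Finset X, F.card = n ∧ A ⊆ ⋃ c ∈ F, Metric.closedBall c s}

/-- The upper gradient at scale `k` of `f` on the finite set `Z`, at the point `x`:
`|∇_k f|(x) = sup { |f(y) − f(y')| : y, y' ∈ Z ∩ B(x,k) }`. -/
noncomputable def gradK {X : Type*} [PseudoMetricSpace X] (k : ℝ) (Z : Set X) (f : X → ℝ)
    (x : X) : ℝ :=
  sSup {t : ℝ | ∃ y ∈ Z, ∃ y' ∈ Z, dist x y ≤ k ∧ dist x y' ≤ k ∧ t = |f y - f y'|}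

/-- The `L¹`-Poincaré constant at scale `k` of a finite subset `Z` with the counting
measure: `h_k^1(Z) = inf ‖∇_k f‖₁ / ‖f‖₁` over nonzero zero-mean functions `f` on `Z`. -/
noncomputable def poincareConst {X : Type*} [PseudoMetricSpace X] (k : ℝ) (Z : Set X) : ℝ :=
  sInf {v : ℝ | ∃ f : X → ℝ, (∑ᶠ z ∈ Z, f z) = 0 ∧ (∃ z ∈ Z, f z ≠ 0) ∧
    v = (∑ᶠ x ∈ Z, gradK k Z f x) / (∑ᶠ x ∈ Z, |f x|)}

/-- The `k`-Cheeger constant of a bounded subset `A`, measured with the `1/5`-volume: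
`h_k(A) = min { |∂_k B ∩ A| / |B| : B ⊆ A, 0 < |B| ≤ |A|/2 }`, where `∂_k B = B^{+k} \ B`. -/
noncomputable def cheegerS {X : Type*} [PseudoMetricSpace X] (k : ℝ) (A : Set X) : ℝ :=
  sInf {v : ℝ | ∃ B : Set X, B ⊆ A ∧ 0 < svol (1 / 5) B ∧
    (svol (1 / 5) B : ℝ) ≤ (svol (1 / 5) A : ℝ) / 2 ∧
    v = (svol (1 / 5) ((thickSet B k \ B) ∩ A) : ℝ) / (svol (1 / 5) B : ℝ)}


section Helpers
variable {X : Type*} [PseudoMetricSpace X]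

/-- helper: membership in the svol covering set gives an upper bound. -/
lemma svol_le_of_cover {s : ℝ} {A : Set X} {F : Finset X}
    (h : A ⊆ ⋃ c ∈ F, Metric.closedBall c s) :
    svol s A ≤ F.card :=
  Nat.sInf_le ⟨F, rfl, h⟩

/-- helper: if some cover exists, an optimal cover exists. -/
lemma exists_optimal_cover {s : ℝ} {A : Set X}
    (h : ∃ F : Finset X, A ⊆ ⋃ c ∈ F, Metric.closedBall c s) :
    ∃ F : Finset X, F.card = svol s A ∧ A ⊆ ⋃ c ∈ F, Metric.closedBall c s := by
  obtain ⟨F, hF⟩ := h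
  have : svol s A ∈ {n : ℕ | ∃ F : Finset X, F.card = n ∧ A ⊆ ⋃ c ∈ F, Metric.closedBall c s} :=
    Nat.sInf_mem ⟨F.card, F, rfl, hF⟩
  exact this

/-- helper: bounded sets admit covers by `1/5`-balls when the space has bounded geometry. -/
lemma exists_cover_of_bounded (hbg : BddGeomAtScale X (1 / 5)) {A : Set X}
    (hA : Bornology.IsBounded A) :
    ∃ F : Finset X, A ⊆ ⋃ c ∈ F, Metric.closedBall c (1 / 5) := by
  rcases A.eq_empty_or_nonempty with rfl | ⟨x₀, hx₀⟩
  · exact ⟨∅, by simp⟩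
  · obtain ⟨r, hr⟩ := hA.subset_closedBall x₀
    obtain ⟨n, hn⟩ := hbg (max r 0) (le_max_right _ _)
    obtain ⟨F, _, hF⟩ := hn x₀
    exact ⟨F, fun x hx => hF ((closedBall_subset_closedBall (le_max_left r 0)) (hr hx))⟩

end Helpers

section Helpers2
open scoped Classical
variable {X : Type*} [PseudoMetricSpace X]

/-- helper: covering-by-balls of radius ρ gives svol bounds via bounded geometry. -/
lemma svol_le_card_mul {ρ : ℝ} {n : ℕ}
    (hcov : ∀ x : X, ∃ F : Finset X, F.card ≤ n ∧
      Metric.closedBall x ρ ⊆ ⋃ c ∈ F, Metric.closedBall c (1/5))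
    {T : Set X} {G : Finset X} (hT : T ⊆ ⋃ c ∈ G, Metric.closedBall c ρ) :
    svol (1/5) T ≤ G.card * n := by
  classical
  choose F hcard hsub using hcov
  have hcover : T ⊆ ⋃ c ∈ G.biUnion F, Metric.closedBall c (1/5) := by
    intro x hx
    obtain ⟨c, hc, hxc⟩ := by simpa using hT hx
    have := hsub c hxc
    simp only [mem_iUnion, exists_prop] at this ⊢
    obtain ⟨c', hc', hxc'⟩ := this
    exact ⟨c', Finset.mem_biUnion.2 ⟨c, hc, hc'⟩, hxc'⟩
  refine le_trans (svol_le_of_cover hcover) ?_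
  calc (G.biUnion F).card ≤ ∑ c ∈ G, (F c).card := Finset.card_biUnion_le
    _ ≤ ∑ _c ∈ G, n := Finset.sum_le_sum (fun c _ => hcard c)
    _ = G.card * n := by simp [Finset.sum_const, Nat.smul_one_eq_cast, mul_comm]

/-- helper: packing bound for separated sets. -/
lemma card_filter_ball_le {ε ρ : ℝ} (hε1 : 1 ≤ ε) {Z : Set X}
    (hsep : ∀ z ∈ Z, ∀ z' ∈ Z, z ≠ z' → ε < dist z z')
    {ZF : Finset X} (hZF : ∀ z ∈ ZF, z ∈ Z) {x : X} {n : ℕ}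
    {F : Finset X} (hcard : F.card ≤ n)
    (hsub : Metric.closedBall x ρ ⊆ ⋃ c ∈ F, Metric.closedBall c (1/5)) :
    (ZF.filter (· ∈ Metric.closedBall x ρ)).card ≤ n := by
  classical
  have hchoice : ∀ z ∈ ZF.filter (· ∈ Metric.closedBall x ρ),
      ∃ c ∈ F, z ∈ Metric.closedBall c (1/5) := by
    intro z hz
    have hz' := (Finset.mem_filter.1 hz).2
    have := hsub hz'
    simpa using this
  choose φ hφF hφd using hchoice
  refine le_trans (Finset.card_le_card_of_injOn (fun z => if h : z ∈ ZF.filter (· ∈ Metric.closedBall x ρ) then φ z h else x) ?_ ?_) hcard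
  · intro z hz
    have hz0 : z ∈ ZF.filter (· ∈ Metric.closedBall x ρ) := hz
    dsimp only; rw [dif_pos hz0]; exact hφF z hz0
  · intro z hz z' hz' heq
    have hz0 : z ∈ ZF.filter (· ∈ Metric.closedBall x ρ) := hz
    have hz0' : z' ∈ ZF.filter (· ∈ Metric.closedBall x ρ) := hz'
    simp only at heq
    rw [dif_pos hz0, dif_pos hz0'] at heq
    by_contra hne
    have h1 := hφd z hz0
    have h2 := hφd z' hz0'
    rw [heq] at h1
    have : dist z z' ≤ 2/5 := by
      have := dist_triangle z (φ z' hz0') z'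
      have d1 : dist z (φ z' hz0') ≤ 1/5 := by simpa [Metric.mem_closedBall] using h1
      have d2 : dist (φ z' hz0') z' ≤ 1/5 := by
        have := h2; rw [Metric.mem_closedBall] at this; linarith [dist_comm (φ z' hz0') z' ▸ this]
      linarith
    have := hsep z (hZF z (Finset.mem_filter.1 hz0).1) z' (hZF z' (Finset.mem_filter.1 hz0').1) hne
    linarith

end Helpers2

section Helpers3
variable {X : Type*} [PseudoMetricSpace X]

lemma gradK_set_finite {k : ℝ} {Z : Set X} (hZ : Z.Finite) (f : X → ℝ) (x : X) :
    {t : ℝ | ∃ y ∈ Z, ∃ y' ∈ Z, dist x y ≤ k ∧ dist x y' ≤ k ∧ t = |f y - f y'|}.Finite := by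
  apply Set.Finite.subset ((hZ.prod hZ).image (fun p => |f p.1 - f p.2|))
  rintro t ⟨y, hy, y', hy', _, _, rfl⟩
  exact ⟨(y, y'), ⟨hy, hy'⟩, rfl⟩

lemma gradK_nonneg {k : ℝ} (hk : 0 < k) {Z : Set X} (hZ : Z.Finite) (f : X → ℝ) {x : X}
    (hx : x ∈ Z) : 0 ≤ gradK k Z f x := by
  have h0 : (0:ℝ) ∈ {t : ℝ | ∃ y ∈ Z, ∃ y' ∈ Z, dist x y ≤ k ∧ dist x y' ≤ k ∧ t = |f y - f y'|} :=
    ⟨x, hx, x, hx, by simp [hk.le], by simp [hk.le], by simp⟩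
  exact le_csSup (gradK_set_finite hZ f x).bddAbove h0

lemma gradK_le {k : ℝ} {Z : Set X} (f : X → ℝ) (x : X) {C : ℝ} (hC : 0 ≤ C)
    (h : ∀ y ∈ Z, ∀ y' ∈ Z, dist x y ≤ k → dist x y' ≤ k → |f y - f y'| ≤ C) :
    gradK k Z f x ≤ C := by
  apply Real.sSup_le _ hC
  rintro t ⟨y, hy, y', hy', hd, hd', rfl⟩
  exact h y hy y' hy' hd hd'

lemma poincare_bddBelow {k : ℝ} (hk : 0 < k) {Z : Set X} (hZ : Z.Finite) :
    BddBelow {v : ℝ | ∃ f : X → ℝ, (∑ᶠ z ∈ Z, f z) = 0 ∧ (∃ z ∈ Z, f z ≠ 0) ∧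
      v = (∑ᶠ x ∈ Z, gradK k Z f x) / (∑ᶠ x ∈ Z, |f x|)} := by
  refine ⟨0, ?_⟩
  rintro v ⟨f, -, -, rfl⟩
  apply div_nonneg
  · rw [finsum_mem_eq_finite_toFinset_sum _ hZ]
    apply Finset.sum_nonneg
    intro x hx
    exact gradK_nonneg hk hZ f (hZ.mem_toFinset.1 hx)
  · rw [finsum_mem_eq_finite_toFinset_sum _ hZ]
    exact Finset.sum_nonneg fun x _ => abs_nonneg _

lemma poincareConst_le_elem {k : ℝ} (hk : 0 < k) {Z : Set X} (hZ : Z.Finite) {f : X → ℝ}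
    (h1 : (∑ᶠ z ∈ Z, f z) = 0) (h2 : ∃ z ∈ Z, f z ≠ 0) :
    poincareConst k Z ≤ (∑ᶠ x ∈ Z, gradK k Z f x) / (∑ᶠ x ∈ Z, |f x|) :=
  csInf_le (poincare_bddBelow hk hZ) ⟨f, h1, h2, rfl⟩

end Helpers3

section Helpers4
open scoped Classical
variable {X : Type*} [PseudoMetricSpace X]

lemma num_le_card_bad {k : ℝ} (hk : 0 < k) {Z : Set X} (hZ : Z.Finite) (f : X → ℝ)
    {bad : Finset X} (hsub : bad ⊆ hZ.toFinset)
    (hgood : ∀ x ∈ Z, x ∉ bad → ∀ y ∈ Z, ∀ y' ∈ Z, dist x y ≤ k → dist x y' ≤ k → f y = f y')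
    (hbound : ∀ y ∈ Z, ∀ y' ∈ Z, |f y - f y'| ≤ 1) :
    (∑ᶠ x ∈ Z, gradK k Z f x) ≤ bad.card := by
  rw [finsum_mem_eq_finite_toFinset_sum _ hZ]
  calc ∑ x ∈ hZ.toFinset, gradK k Z f x
      ≤ ∑ x ∈ hZ.toFinset, (if x ∈ bad then (1:ℝ) else 0) := by
        apply Finset.sum_le_sum
        intro x hx
        have hxZ : x ∈ Z := hZ.mem_toFinset.1 hx
        by_cases hb : x ∈ bad
        · simp only [if_pos hb]
          exact gradK_le f x zero_le_one fun y hy y' hy' hd hd' => by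
            rw [abs_sub_le_iff]; constructor <;> nlinarith [hbound y hy y' hy', abs_nonneg (f y - f y'), le_abs_self (f y - f y'), neg_abs_le (f y - f y')]
        · simp only [if_neg hb]
          exact gradK_le f x le_rfl fun y hy y' hy' hd hd' => by
            rw [hgood x hxZ hb y hy y' hy' hd hd']; simp
    _ = ∑ x ∈ hZ.toFinset ∩ bad, (1:ℝ) := Finset.sum_ite_mem _ _ _
    _ = bad.card := by rw [Finset.inter_eq_right.2 hsub]; simp

lemma poincare_le_of_pack {k : ℝ} (hk : 0 < k) {Z : Set X} (hZ : Z.Finite) {N : ℕ}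
    (hpack : ∀ z₀ ∈ Z, (hZ.toFinset.filter (· ∈ Metric.closedBall z₀ k)).card ≤ N) :
    poincareConst k Z ≤ 2 * N := by
  by_cases htwo : ∃ z₀ ∈ Z, ∃ z₁ ∈ Z, z₀ ≠ z₁
  · obtain ⟨z₀, hz₀, z₁, hz₁, hne⟩ := htwo
    set n := hZ.toFinset.card with hn
    have hn2 : 2 ≤ n := by
      refine Finset.one_lt_card.2 ⟨z₀, hZ.mem_toFinset.2 hz₀, z₁, hZ.mem_toFinset.2 hz₁, hne⟩
    have hnpos : (0:ℝ) < n := by positivity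
    set f : X → ℝ := fun x => (if x = z₀ then 1 else 0) - 1 / n with hf
    have hmean : (∑ᶠ z ∈ Z, f z) = 0 := by
      rw [finsum_mem_eq_finite_toFinset_sum _ hZ]
      rw [Finset.sum_sub_distrib, Finset.sum_ite_eq' _ z₀ (fun _ => (1:ℝ))]
      simp only [hZ.mem_toFinset.2 hz₀, if_pos, Finset.sum_const, nsmul_eq_mul]
      field_simp
      rw [← hn]; ring
    have hwit : ∃ z ∈ Z, f z ≠ 0 := by
      refine ⟨z₁, hz₁, ?_⟩
      have h10 : z₁ ≠ z₀ := fun h => hne h.symm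
      simp only [hf, if_neg h10, zero_sub, ne_eq, neg_eq_zero]
      positivity
    have hnum : (∑ᶠ x ∈ Z, gradK k Z f x)
        ≤ ((hZ.toFinset.filter (· ∈ Metric.closedBall z₀ k)).card : ℝ) := by
      apply num_le_card_bad hk hZ f (Finset.filter_subset _ _)
      · intro x hxZ hxbad y hy y' hy' hd hd'
        have hxz₀ : ¬ dist x z₀ ≤ k := by
          intro hle
          exact hxbad (Finset.mem_filter.2 ⟨hZ.mem_toFinset.2 hxZ, Metric.mem_closedBall.2 hle⟩)
        have hyne : y ≠ z₀ := fun h => hxz₀ (h ▸ hd)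
        have hy'ne : y' ≠ z₀ := fun h => hxz₀ (h ▸ hd')
        simp [hf, if_neg hyne, if_neg hy'ne]
      · intro y hy y' hy'
        have heq : f y - f y' = (if y = z₀ then (1:ℝ) else 0) - (if y' = z₀ then 1 else 0) := by
          simp only [hf]; ring
        rw [heq]
        split_ifs <;> norm_num
    have hnum0 : 0 ≤ ∑ᶠ x ∈ Z, gradK k Z f x := by
      rw [finsum_mem_eq_finite_toFinset_sum _ hZ]
      exact Finset.sum_nonneg fun x hx => gradK_nonneg hk hZ f (hZ.mem_toFinset.1 hx)
    have hinvn : (1:ℝ)/n ≤ 1/2 := by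
      rw [div_le_div_iff₀ hnpos two_pos]
      have : (2:ℝ) ≤ n := by exact_mod_cast hn2
      linarith
    have hden : (1:ℝ)/2 ≤ ∑ᶠ x ∈ Z, |f x| := by
      rw [finsum_mem_eq_finite_toFinset_sum _ hZ]
      have hfz₀ : f z₀ = 1 - 1/n := by simp [hf]
      have hterm : |f z₀| = 1 - 1/n := by
        rw [hfz₀, abs_of_nonneg (by linarith)]
      calc (1:ℝ)/2 ≤ 1 - 1/n := by linarith
        _ = |f z₀| := hterm.symm
        _ ≤ ∑ x ∈ hZ.toFinset, |f x| :=
          Finset.single_le_sum (fun i _ => abs_nonneg (f i)) (hZ.mem_toFinset.2 hz₀)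
    have hnumN : (∑ᶠ x ∈ Z, gradK k Z f x) ≤ (N : ℝ) :=
      le_trans hnum (by exact_mod_cast hpack z₀ hz₀)
    calc poincareConst k Z ≤ (∑ᶠ x ∈ Z, gradK k Z f x) / (∑ᶠ x ∈ Z, |f x|) :=
        poincareConst_le_elem hk hZ hmean hwit
      _ ≤ 2 * N := by
        rw [div_le_iff₀ (by linarith : (0:ℝ) < ∑ᶠ x ∈ Z, |f x|)]
        nlinarith [Nat.cast_nonneg (α := ℝ) N]
  · have hempty : {v : ℝ | ∃ f : X → ℝ, (∑ᶠ z ∈ Z, f z) = 0 ∧ (∃ z ∈ Z, f z ≠ 0) ∧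
        v = (∑ᶠ x ∈ Z, gradK k Z f x) / (∑ᶠ x ∈ Z, |f x|)} = ∅ := by
      rw [Set.eq_empty_iff_forall_notMem]
      rintro v ⟨f, hmean, ⟨z, hz, hfz⟩, -⟩
      apply hfz
      have hZsub : Z = {z} := by
        apply Set.eq_singleton_iff_unique_mem.2
        exact ⟨hz, fun w hw => by
          by_contra hne
          exact htwo ⟨w, hw, z, hz, hne⟩⟩
      rw [hZsub] at hmean
      simpa using hmean
    rw [poincareConst, hempty, Real.sInf_empty]
    positivity

end Helpers4

set_option maxHeartbeats 2000000

/-- In a `k`-coarsely geodesic space of bounded geometry at scale `1/5`, the `L¹`-Poincaré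
constant at scale `k` of any maximal `ε`-separated net `Z` of a bounded subset `A`
(`1 ≤ ε ≤ k`) is bounded above by `M·h_k(A)`, with `M` depending only on `X`, `k`, `ε`. -/
theorem poincareConst_le_cheeger
    {X : Type*} [MetricSpace X] (k : ℝ) (hk : 0 < k)
    (hgeo : KCoarselyGeodesic k (Set.univ : Set X))
    (hbg : BddGeomAtScale X (1 / 5))
    (ε : ℝ) (hε1 : 1 ≤ ε) (hεk : ε ≤ k) :
    ∃ M > (0 : ℝ), ∀ A Z : Set X, Bornology.IsBounded A → Z ⊆ A →
      (∀ z ∈ Z, ∀ z' ∈ Z, z ≠ z' → ε < dist z z') →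
      (∀ a ∈ A, ∃ z ∈ Z, dist a z ≤ ε) →
      poincareConst k Z ≤ M * cheegerS k A := by
  classical
  obtain ⟨ne', hne⟩ := hbg (ε + 1/5) (by linarith)
  obtain ⟨nk', hnk⟩ := hbg (k + 1/5) (by linarith)
  set N₀ : ℕ := ne' + 1 with hN₀def
  set N₁ : ℕ := nk' + 1 with hN₁def
  set M : ℝ := 4 * N₀ * N₁ with hMdef
  have hMpos : 0 < M := by positivity
  have hne'N₀ : ne' ≤ N₀ := Nat.le_succ ne'
  have hnk'N₁ : nk' ≤ N₁ := Nat.le_succ nk'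
  clear_value N₀ N₁ M
  refine ⟨M, hMpos, ?_⟩
  intro A Z hA hZA hsep hnet
  -- Z is finite
  have hZfin : Z.Finite := by
    obtain ⟨F, hF⟩ := exists_cover_of_bounded hbg hA
    have hsub : Z ⊆ ⋃ c ∈ (F : Set X), (Z ∩ Metric.closedBall c (1/5)) := by
      intro z hz
      have := hF (hZA hz)
      simp only [Set.mem_iUnion, exists_prop] at this ⊢
      obtain ⟨c, hc, hd⟩ := this
      exact ⟨c, hc, hz, hd⟩
    refine Set.Finite.subset (Set.Finite.biUnion F.finite_toSet fun c _ => ?_) hsub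
    refine Set.Subsingleton.finite fun a ha b hb => ?_
    by_contra hab
    have h1 := hsep a ha.1 b hb.1 hab
    have d1 : dist a c ≤ 1/5 := ha.2
    have d2 : dist b c ≤ 1/5 := hb.2
    have := dist_triangle a c b
    rw [dist_comm b c] at d2
    linarith
  set ZF : Finset X := hZfin.toFinset with hZFdef
  have hZFmem : ∀ {z : X}, z ∈ ZF ↔ z ∈ Z := fun {z} => hZfin.mem_toFinset
  -- packing bound at scale k + 1/5
  have hpack : ∀ x : X, (ZF.filter (· ∈ Metric.closedBall x (k + 1/5))).card ≤ nk' := by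
    intro x
    obtain ⟨F, hcard, hsub⟩ := hnk x
    exact card_filter_ball_le hε1 hsep (fun z hz => hZFmem.1 hz) hcard hsub
  have hpackk : ∀ z₀ ∈ Z, (ZF.filter (· ∈ Metric.closedBall z₀ k)).card ≤ nk' := by
    intro z₀ _
    have hss : ZF.filter (· ∈ Metric.closedBall z₀ k) ⊆ ZF.filter (· ∈ Metric.closedBall z₀ (k + 1/5)) := by
      intro x hx
      rw [Finset.mem_filter] at hx ⊢
      exact ⟨hx.1, Metric.closedBall_subset_closedBall (by linarith) hx.2⟩
    exact le_trans (Finset.card_le_card hss) (hpack z₀)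
  -- universal bound
  have huniv : poincareConst k Z ≤ 2 * nk' := poincare_le_of_pack hk hZfin hpackk
  -- main bound for each element of the Cheeger family
  have key : ∀ v ∈ {v : ℝ | ∃ B : Set X, B ⊆ A ∧ 0 < svol (1 / 5) B ∧
      (svol (1 / 5) B : ℝ) ≤ (svol (1 / 5) A : ℝ) / 2 ∧
      v = (svol (1 / 5) ((thickSet B k \ B) ∩ A) : ℝ) / (svol (1 / 5) B : ℝ)},
      poincareConst k Z ≤ M * v := by
    rintro v ⟨B, hBA, hBpos, hBhalf, rfl⟩
    set b := svol (1/5) B with hbdef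
    set m := svol (1/5) ((thickSet B k \ B) ∩ A) with hmdef
    have hb0 : (0:ℝ) < b := by exact_mod_cast hBpos
    -- optimal cover of the boundary
    obtain ⟨WF, hWFcard, hWFsub⟩ := exists_optimal_cover
      (exists_cover_of_bounded hbg (hA.subset Set.inter_subset_right))
    rw [← hmdef] at hWFcard
    clear_value b m
    set SF := ZF.filter (· ∈ thickSet B ε) with hSFdef
    set TF := ZF.filter (fun z => z ∉ thickSet B ε) with hTFdef
    have hSFmem : ∀ {x : X}, x ∈ SF ↔ x ∈ ZF ∧ x ∈ thickSet B ε := by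
      intro x; rw [hSFdef, Finset.mem_filter]
    have hTFmem : ∀ {x : X}, x ∈ TF ↔ x ∈ ZF ∧ x ∉ thickSet B ε := by
      intro x; rw [hTFdef, Finset.mem_filter]
    -- (a) b ≤ SF.card * N₀
    have hBS : B ⊆ ⋃ c ∈ SF, Metric.closedBall c (ε + 1/5) := by
      intro x hx
      obtain ⟨z, hzZ, hdz⟩ := hnet x (hBA hx)
      have hzS : z ∈ SF := Finset.mem_filter.2 ⟨hZFmem.2 hzZ, ⟨x, hx, by rwa [dist_comm]⟩⟩
      simp only [Set.mem_iUnion, exists_prop]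
      exact ⟨z, hzS, Metric.mem_closedBall.2 (by linarith)⟩
    have hbS : b ≤ SF.card * N₀ := by
      rw [hbdef]
      exact le_trans (svol_le_card_mul hne hBS) (Nat.mul_le_mul_left _ hne'N₀)
    -- (b) b ≤ (TF.card + m) * N₀
    have hABcover : (A \ B) ⊆ ⋃ c ∈ (TF ∪ WF), Metric.closedBall c (ε + 1/5) := by
      intro x hx
      obtain ⟨z, hzZ, hdz⟩ := hnet x hx.1
      simp only [Set.mem_iUnion, exists_prop, Finset.mem_union]
      by_cases hzth : z ∈ thickSet B ε
      · by_cases hzB : z ∈ B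
        · have hxW : x ∈ (thickSet B k \ B) ∩ A :=
            ⟨⟨⟨z, hzB, le_trans hdz hεk⟩, hx.2⟩, hx.1⟩
          have := hWFsub hxW
          simp only [Set.mem_iUnion, exists_prop] at this
          obtain ⟨c, hc, hdc⟩ := this
          refine ⟨c, Or.inr hc, Metric.mem_closedBall.2 ?_⟩
          have h1 : dist x c ≤ 1/5 := Metric.mem_closedBall.1 hdc
          linarith
        · have hzW : z ∈ (thickSet B k \ B) ∩ A := by
            obtain ⟨p, hpB, hdp⟩ := hzth
            exact ⟨⟨⟨p, hpB, le_trans hdp hεk⟩, hzB⟩, hZA hzZ⟩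
          have := hWFsub hzW
          simp only [Set.mem_iUnion, exists_prop] at this
          obtain ⟨c, hc, hdc⟩ := this
          refine ⟨c, Or.inr hc, Metric.mem_closedBall.2 ?_⟩
          have h1 : dist z c ≤ 1/5 := Metric.mem_closedBall.1 hdc
          have h2 := dist_triangle x z c
          linarith
      · exact ⟨z, Or.inl (Finset.mem_filter.2 ⟨hZFmem.2 hzZ, hzth⟩),
          Metric.mem_closedBall.2 (by linarith)⟩
    have hq : svol (1/5) (A \ B) ≤ (TF.card + m) * N₀ := by
      refine le_trans (svol_le_card_mul hne hABcover) ?_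
      refine le_trans (Nat.mul_le_mul_left _ (hne'N₀)) ?_
      refine Nat.mul_le_mul_right _ ?_
      exact le_trans (Finset.card_union_le TF WF) (by rw [hWFcard])
    have ha : svol (1/5) A ≤ b + svol (1/5) (A \ B) := by
      obtain ⟨FB, hFBcard, hFBsub⟩ := exists_optimal_cover
        (exists_cover_of_bounded hbg (hA.subset hBA))
      obtain ⟨FD, hFDcard, hFDsub⟩ := exists_optimal_cover
        (exists_cover_of_bounded hbg (hA.subset Set.diff_subset))
      have hcov : A ⊆ ⋃ c ∈ (FB ∪ FD), Metric.closedBall c (1/5) := by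
        intro x hx
        simp only [Set.mem_iUnion, exists_prop, Finset.mem_union]
        by_cases hxB : x ∈ B
        · have := hFBsub hxB
          simp only [Set.mem_iUnion, exists_prop] at this
          obtain ⟨c, hc, hd⟩ := this
          exact ⟨c, Or.inl hc, hd⟩
        · have := hFDsub ⟨hx, hxB⟩
          simp only [Set.mem_iUnion, exists_prop] at this
          obtain ⟨c, hc, hd⟩ := this
          exact ⟨c, Or.inr hc, hd⟩
      calc svol (1/5) A ≤ (FB ∪ FD).card := svol_le_of_cover hcov
        _ ≤ FB.card + FD.card := Finset.card_union_le _ _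
        _ = b + svol (1/5) (A \ B) := by rw [hFBcard, hFDcard, ← hbdef]
    have h2b : 2 * b ≤ svol (1/5) A := by
      have h2b' : (2:ℝ) * b ≤ (svol (1/5) A : ℝ) := by linarith
      exact_mod_cast h2b'
    have hKI : b ≤ (TF.card + m) * N₀ := by
      have h3 : 2*b ≤ b + (TF.card + m) * N₀ :=
        le_trans h2b (le_trans ha (Nat.add_le_add_left hq b))
      rw [two_mul] at h3
      exact Nat.le_of_add_le_add_left h3
    -- bad set and numerator bound
    set bad := ZF.filter (fun x => ∃ y ∈ ZF, y ∈ thickSet B ε ∧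
      ∃ y' ∈ ZF, y' ∉ thickSet B ε ∧ dist x y ≤ k ∧ dist x y' ≤ k) with hbaddef
    have hbadsub : bad ⊆ WF.biUnion (fun c => ZF.filter (· ∈ Metric.closedBall c (k + 1/5))) := by
      intro x hx
      rw [hbaddef, Finset.mem_filter] at hx
      obtain ⟨hxZF, y, hyZF, hyth, y', hy'ZF, hy'th, hdy, hdy'⟩ := hx
      have hW : ∃ w ∈ (thickSet B k \ B) ∩ A, dist x w ≤ k := by
        by_cases hyB : y ∈ B
        · by_cases hxB : x ∈ B
          · refine ⟨y', ⟨⟨⟨x, hxB, by rw [dist_comm]; exact hdy'⟩, ?_⟩,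
              hZA (hZFmem.1 hy'ZF)⟩, hdy'⟩
            intro hc
            exact hy'th ⟨y', hc, by rw [dist_self]; linarith⟩
          · exact ⟨x, ⟨⟨⟨y, hyB, hdy⟩, hxB⟩, hZA (hZFmem.1 hxZF)⟩,
              by rw [dist_self]; linarith⟩
        · obtain ⟨p, hpB, hdp⟩ := hyth
          exact ⟨y, ⟨⟨⟨p, hpB, le_trans hdp hεk⟩, hyB⟩, hZA (hZFmem.1 hyZF)⟩, hdy⟩
      obtain ⟨w, hwW, hdw⟩ := hW
      have := hWFsub hwW
      simp only [Set.mem_iUnion, exists_prop] at this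
      obtain ⟨c, hcWF, hdc⟩ := this
      refine Finset.mem_biUnion.2 ⟨c, hcWF, Finset.mem_filter.2 ⟨hxZF, Metric.mem_closedBall.2 ?_⟩⟩
      have h1 : dist w c ≤ 1/5 := Metric.mem_closedBall.1 hdc
      have h2 := dist_triangle x w c
      linarith
    have hbadcard : bad.card ≤ m * N₁ := by
      refine le_trans (Finset.card_le_card hbadsub) (le_trans Finset.card_biUnion_le ?_)
      calc ∑ c ∈ WF, (ZF.filter (· ∈ Metric.closedBall c (k+1/5))).card
          ≤ ∑ _c ∈ WF, N₁ := Finset.sum_le_sum (fun c _ => le_trans (hpack c) (hnk'N₁))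
        _ = m * N₁ := by rw [Finset.sum_const, smul_eq_mul, hWFcard]
    -- basic cardinalities
    have hst : SF.card + TF.card = ZF.card := by
      rw [hSFdef, hTFdef]
      exact Finset.card_filter_add_card_filter_not (p := (· ∈ thickSet B ε))
    have hs1 : 1 ≤ SF.card := by
      rcases Nat.eq_zero_or_pos SF.card with h | h
      · rw [h, Nat.zero_mul] at hbS; omega
      · exact h
    clear_value SF TF
    by_cases hcase : b ≤ 2 * TF.card * N₀
    · -- main case: use the indicator function of the ε-neighbourhood of B
      have ht1 : 1 ≤ TF.card := by
        rcases Nat.eq_zero_or_pos TF.card with h | h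
        · rw [h] at hcase; simp at hcase; omega
        · exact h
      have hZcard0 : (0:ℝ) < ZF.card := by
        have : 0 < ZF.card := by omega
        exact_mod_cast this
      set c : ℝ := (SF.card : ℝ) / (ZF.card : ℝ) with hcdef
      have hc0 : 0 < c := by
        rw [hcdef]
        apply div_pos _ hZcard0
        exact_mod_cast hs1
      have hc1 : c ≤ 1 := by
        rw [hcdef, div_le_one hZcard0]
        exact_mod_cast (by omega : SF.card ≤ ZF.card)
      clear_value c
      set f : X → ℝ := fun x => (thickSet B ε).indicator (fun _ => (1:ℝ)) x - c with hfdef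
      have hfS : ∀ x, x ∈ thickSet B ε → f x = 1 - c := by
        intro x hx; rw [hfdef]; simp [Set.indicator_of_mem hx]
      have hfT : ∀ x, x ∉ thickSet B ε → f x = -c := by
        intro x hx; rw [hfdef]; simp [Set.indicator_of_notMem hx]
      clear_value f
      have hsplit : ∀ g : X → ℝ, ∑ x ∈ ZF, g x = ∑ x ∈ SF, g x + ∑ x ∈ TF, g x := by
        intro g
        rw [hSFdef, hTFdef]
        exact (Finset.sum_filter_add_sum_filter_not ZF (· ∈ thickSet B ε) g).symm
      have hmean : (∑ᶠ z ∈ Z, f z) = 0 := by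
        rw [finsum_mem_eq_finite_toFinset_sum _ hZfin, ← hZFdef, hsplit]
        rw [Finset.sum_congr rfl (fun x hx => hfS x (hSFmem.1 hx).2),
          Finset.sum_congr rfl (fun x hx => hfT x (hTFmem.1 hx).2)]
        rw [Finset.sum_const, Finset.sum_const, nsmul_eq_mul, nsmul_eq_mul, hcdef]
        have hn' : (ZF.card : ℝ) = (SF.card : ℝ) + (TF.card : ℝ) := by exact_mod_cast hst.symm
        field_simp
        linear_combination (SF.card : ℝ) * hn' 
      have hwit : ∃ z ∈ Z, f z ≠ 0 := by
        obtain ⟨z₁, hz₁⟩ := Finset.card_pos.1 ht1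
        have hz₁th : z₁ ∉ thickSet B ε := (hTFmem.1 hz₁).2
        refine ⟨z₁, hZFmem.1 (hTFmem.1 hz₁).1, ?_⟩
        rw [hfT z₁ hz₁th]
        simp only [ne_eq, neg_eq_zero]
        exact ne_of_gt hc0
      have hnum : (∑ᶠ x ∈ Z, gradK k Z f x) ≤ (bad.card : ℝ) := by
        apply num_le_card_bad hk hZfin f (Finset.filter_subset _ _)
        · intro x hxZ hxbad y hy y' hy' hd hd'
          rw [Finset.mem_filter, not_and] at hxbad
          have hnb := hxbad (hZFmem.2 hxZ)
          push_neg at hnb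
          by_cases hyth : y ∈ thickSet B ε <;> by_cases hy'th : y' ∈ thickSet B ε
          · rw [hfS y hyth, hfS y' hy'th]
          · exact absurd (hnb y (hZFmem.2 hy) hyth y' (hZFmem.2 hy') hy'th hd) (by simpa using hd')
          · exact absurd (hnb y' (hZFmem.2 hy') hy'th y (hZFmem.2 hy) hyth hd') (by simpa using hd)
          · rw [hfT y hyth, hfT y' hy'th]
        · intro y hy y' hy'
          have heq : f y - f y' = (thickSet B ε).indicator (fun _ => (1:ℝ)) y
              - (thickSet B ε).indicator (fun _ => (1:ℝ)) y' := by
            rw [hfdef]; ring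
          rw [heq]
          by_cases h1 : y ∈ thickSet B ε <;> by_cases h2 : y' ∈ thickSet B ε <;>
            simp [Set.indicator_of_mem, Set.indicator_of_notMem, h1, h2] <;> norm_num
      have hnum' : (∑ᶠ x ∈ Z, gradK k Z f x) ≤ (m:ℝ) * N₁ := by
        refine le_trans hnum ?_
        exact_mod_cast hbadcard
      have hnum0 : 0 ≤ ∑ᶠ x ∈ Z, gradK k Z f x := by
        rw [finsum_mem_eq_finite_toFinset_sum _ hZfin]
        exact Finset.sum_nonneg fun x hx => gradK_nonneg hk hZfin f (hZfin.mem_toFinset.1 hx)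
      have hden_eq : (∑ᶠ x ∈ Z, |f x|) = SF.card * (1 - c) + TF.card * c := by
        rw [finsum_mem_eq_finite_toFinset_sum _ hZfin, ← hZFdef, hsplit]
        have e1 : ∀ x ∈ SF, |f x| = 1 - c := fun x hx => by
          rw [hfS x (hSFmem.1 hx).2]; exact abs_of_nonneg (by linarith)
        have e2 : ∀ x ∈ TF, |f x| = c := fun x hx => by
          rw [hfT x (hTFmem.1 hx).2, abs_neg]; exact abs_of_nonneg (by linarith)
        rw [Finset.sum_congr rfl e1, Finset.sum_congr rfl e2, Finset.sum_const, Finset.sum_const,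
          nsmul_eq_mul, nsmul_eq_mul]
      have hfinal : ∀ u : ℕ, (b:ℝ) ≤ 2 * u * N₀ → ((u:ℝ)/2 ≤ ∑ᶠ x ∈ Z, |f x|) →
          poincareConst k Z ≤ M * ((m:ℝ)/(b:ℝ)) := by
        intro u hbu hdenom
        have hu0 : (0:ℝ) < u := by
          by_contra hu
          push_neg at hu
          have hu' : (u:ℝ) = 0 := le_antisymm hu (Nat.cast_nonneg _)
          rw [hu'] at hbu
          simp at hbu
          linarith
        have hd0 : (0:ℝ) < (u:ℝ)/2 := by linarith
        calc poincareConst k Z ≤ (∑ᶠ x ∈ Z, gradK k Z f x) / (∑ᶠ x ∈ Z, |f x|) :=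
            poincareConst_le_elem hk hZfin hmean hwit
          _ ≤ ((m:ℝ) * N₁) / ((u:ℝ)/2) := by
              apply div_le_div₀ (by positivity) hnum' hd0 hdenom
          _ ≤ M * ((m:ℝ)/b) := by
              have heq : M * ((m:ℝ)/b) = (M * (m:ℝ))/b := by ring
              rw [heq, div_le_div_iff₀ hd0 hb0, hMdef]
              have hm0 : (0:ℝ) ≤ m := Nat.cast_nonneg _
              have hN₁0 : (0:ℝ) ≤ N₁ := Nat.cast_nonneg _
              nlinarith [mul_le_mul_of_nonneg_left hbu (mul_nonneg hm0 hN₁0)]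
      have hcast : (ZF.card : ℝ) = (SF.card : ℝ) + (TF.card : ℝ) := by exact_mod_cast hst.symm
      have hSF0 : (0:ℝ) ≤ SF.card := Nat.cast_nonneg _
      have hTF0 : (0:ℝ) ≤ TF.card := Nat.cast_nonneg _
      by_cases hb2 : SF.card ≤ TF.card
      · apply hfinal SF.card
        · have h1 : (b:ℝ) ≤ SF.card * N₀ := by exact_mod_cast hbS
          have hN₀0 : (0:ℝ) ≤ N₀ := Nat.cast_nonneg _
          nlinarith
        · rw [hden_eq]
          have hcc : c ≤ 1/2 := by
            rw [hcdef, div_le_iff₀ hZcard0]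
            have h1 : (SF.card:ℝ) ≤ TF.card := by exact_mod_cast hb2
            linarith
          nlinarith [mul_nonneg hSF0 (by linarith : (0:ℝ) ≤ 1/2 - c),
            mul_nonneg hTF0 hc0.le]
      · apply hfinal TF.card
        · exact_mod_cast hcase
        · rw [hden_eq]
          have hcc : 1/2 ≤ c := by
            rw [hcdef, le_div_iff₀ hZcard0]
            push_neg at hb2
            have h1 : (TF.card:ℝ) ≤ SF.card := by exact_mod_cast hb2.le
            linarith
          nlinarith [mul_nonneg hTF0 (by linarith : (0:ℝ) ≤ c - 1/2),
            mul_nonneg hSF0 (by linarith : (0:ℝ) ≤ 1 - c)]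
    · -- sparse case: the boundary is necessarily large, use the universal bound
      have hmb' : (b:ℝ) ≤ 2 * m * N₀ := by
        push_neg at hcase
        have h1 : (b:ℝ) ≤ ((TF.card + m) * N₀ : ℕ) := by exact_mod_cast hKI
        have h2 : ((2 * TF.card * N₀ : ℕ) : ℝ) < (b:ℝ) := by exact_mod_cast hcase
        push_cast at h1 h2
        rw [add_mul] at h1
        linarith
      calc poincareConst k Z ≤ 2 * nk' := huniv
        _ ≤ M * ((m:ℝ)/b) := by
          have hN₁' : (nk' : ℝ) ≤ N₁ := by exact_mod_cast hnk'N₁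
          have heq : M * ((m:ℝ)/b) = (M * m)/b := by ring
          rw [heq, le_div_iff₀ hb0, hMdef]
          have hN₀0 : (0:ℝ) ≤ N₀ := Nat.cast_nonneg _
          have hN₁0 : (0:ℝ) ≤ N₁ := Nat.cast_nonneg _
          have hm0 : (0:ℝ) ≤ m := Nat.cast_nonneg _
          nlinarith [mul_le_mul hN₁' hmb' (Nat.cast_nonneg _) hN₁0,
            mul_nonneg hN₀0 (mul_nonneg hN₁0 hm0)]

  -- conclude
  rcases Set.eq_empty_or_nonempty {v : ℝ | ∃ B : Set X, B ⊆ A ∧ 0 < svol (1 / 5) B ∧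
      (svol (1 / 5) B : ℝ) ≤ (svol (1 / 5) A : ℝ) / 2 ∧
      v = (svol (1 / 5) ((thickSet B k \ B) ∩ A) : ℝ) / (svol (1 / 5) B : ℝ)} with hS | hS
  · -- the Cheeger family is empty: Z has at most one point
    have hch : cheegerS k A = 0 := by rw [cheegerS, hS, Real.sInf_empty]
    rw [hch, mul_zero]
    -- Z has at most one point
    have hone : ∀ z ∈ Z, ∀ z' ∈ Z, z = z' := by
      intro z hz z' hz'
      by_contra hzz
      -- construct an element of the family from the singleton {z}
      have hcov1 : ({z} : Set X) ⊆ ⋃ c ∈ ({z} : Finset X), Metric.closedBall c (1/5) := by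
        intro x hx
        rw [Set.mem_singleton_iff] at hx
        simp only [Finset.mem_singleton, Set.mem_iUnion, exists_prop]
        exact ⟨z, rfl, by rw [Metric.mem_closedBall, hx, dist_self]; norm_num⟩
      have hzpos : 0 < svol (1/5) ({z} : Set X) := by
        rcases Nat.eq_zero_or_pos (svol (1/5) ({z} : Set X)) with h | h
        case inr => exact h
        · exfalso
          obtain ⟨F, hFcard, hFsub⟩ := exists_optimal_cover ⟨{z}, hcov1⟩
          rw [h, Finset.card_eq_zero] at hFcard
          subst hFcard
          simpa using hFsub (Set.mem_singleton z)
      have hzle : svol (1/5) ({z} : Set X) ≤ 1 := by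
        simpa using svol_le_of_cover hcov1
      have hA2 : 2 ≤ svol (1/5) A := by
        obtain ⟨F, hFcard, hFsub⟩ := exists_optimal_cover (exists_cover_of_bounded hbg hA)
        rw [← hFcard]
        by_contra hlt
        push_neg at hlt
        interval_cases h : F.card
        · rw [Finset.card_eq_zero] at h; subst h
          simpa using hFsub (hZA hz)
        · obtain ⟨c, hc⟩ := Finset.card_eq_one.1 h
          subst hc
          have d1 : dist z c ≤ 1/5 := by simpa using hFsub (hZA hz)
          have d2 : dist z' c ≤ 1/5 := by simpa using hFsub (hZA hz')
          have := hsep z hz z' hz' hzz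
          have := dist_triangle z c z'
          rw [dist_comm z' c] at d2
          linarith
      have : ((svol (1/5) ({z} : Set X) : ℝ)) ≤ (svol (1/5) A : ℝ) / 2 := by
        have h1 : (svol (1/5) ({z} : Set X) : ℝ) ≤ 1 := by exact_mod_cast hzle
        have h2 : (2 : ℝ) ≤ (svol (1/5) A : ℝ) := by exact_mod_cast hA2
        linarith
      exact (Set.eq_empty_iff_forall_notMem.1 hS) _
        ⟨{z}, by simpa using hZA hz, hzpos, this, rfl⟩
    -- hence the Poincaré family is empty
    have hempty : {v : ℝ | ∃ f : X → ℝ, (∑ᶠ z ∈ Z, f z) = 0 ∧ (∃ z ∈ Z, f z ≠ 0) ∧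
        v = (∑ᶠ x ∈ Z, gradK k Z f x) / (∑ᶠ x ∈ Z, |f x|)} = ∅ := by
      rw [Set.eq_empty_iff_forall_notMem]
      rintro v ⟨f, hmean, ⟨z, hz, hfz⟩, -⟩
      apply hfz
      have hZsing : Z = {z} := by
        apply Set.eq_singleton_iff_unique_mem.2
        exact ⟨hz, fun w hw => hone w hw z hz⟩
      rw [hZsing] at hmean
      simpa using hmean
    rw [poincareConst, hempty, Real.sInf_empty]
  · -- the Cheeger family is nonempty
    have hdiv : ∀ v ∈ {v : ℝ | ∃ B : Set X, B ⊆ A ∧ 0 < svol (1 / 5) B ∧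
        (svol (1 / 5) B : ℝ) ≤ (svol (1 / 5) A : ℝ) / 2 ∧
        v = (svol (1 / 5) ((thickSet B k \ B) ∩ A) : ℝ) / (svol (1 / 5) B : ℝ)},
        poincareConst k Z / M ≤ v := by
      intro v hv
      rw [div_le_iff₀ hMpos]
      calc poincareConst k Z ≤ M * v := key v hv
        _ = v * M := mul_comm _ _
    have := le_csInf hS hdiv
    rw [div_le_iff₀ hMpos] at this
    rw [cheegerS]
    linarith [this]
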